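/- Let p be a prime and let n, m, r be integers with 2 ≤ r ≤ n − 1 and n − r ≤ m. In the group G = G(n,m,r) with generators a, b as in the presentation, the center of G equals the subgroup ⟨a^{p^{n−r}}, b^{p^{n−r}}⟩ generated by a^{p^{n−r}} and b^{p^{n−r}}. -/

import Mathlib

open scoped commutatorElement

/-- The relations of the presentation `⟨a, b ∣ a^(p^n) = 1, b^(p^m) = 1, [a,b] = a^(p^r)⟩`. -/
def splitRels (p n m r : ℕ) : Set (FreeGroup (Fin 2)) :=
  {FreeGroup.of (0 : Fin 2) ^ p ^ n, FreeGroup.of (1 : Fin 2) ^ p ^ m,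
    ⁅FreeGroup.of (0 : Fin 2), FreeGroup.of (1 : Fin 2)⁆ * (FreeGroup.of (0 : Fin 2) ^ p ^ r)⁻¹}

/-- The group `G(n,m,r) = ⟨a, b ∣ a^(p^n) = 1, b^(p^m) = 1, [a,b] = a^(p^r)⟩`. -/
abbrev GSplit (p n m r : ℕ) : Type := PresentedGroup (splitRels p n m r)

/-!
The relation `[a,b] = a^(p^r)` says `b a b⁻¹ = a^u` with `u = 1 - p^r`, so `G(n,m,r)` is the
semidirect product `ℤ/p^n ⋊ ℤ/p^m` in which the generator of `ℤ/p^m` acts by multiplication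
by `u`. An element `(x, y)` of it is central iff `u x = x` and `u^y = 1`. The first condition
says `p^r x = 0`, i.e. `p^(n-r) ∣ x`. For the second, `(1 - p^r)^(p^k) ≡ 1 - p^(r+k)` modulo
`p^(r+k+1)` (this needs `r ≥ 2`), so `u` has order exactly `p^(n-r)` modulo `p^n`, and
`u^y = 1` iff `p^(n-r) ∣ y`.
-/

open Multiplicative Subgroup SemidirectProduct

section ZModPow

variable {G : Type*} [Group G] {M : ℕ} [NeZero M]

def zmodPowHom (g : G) (hg : g ^ M = 1) : Multiplicative (ZMod M) →* G where
  toFun j := g ^ j.toAdd.val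
  map_one' := by simp
  map_mul' x y := by rw [toAdd_mul, ZMod.val_add, ← pow_eq_pow_mod _ hg, pow_add]

theorem zmodPowHom_ofAdd_intCast (g : G) (hg : g ^ M = 1) (z : ℤ) :
    zmodPowHom g hg (ofAdd z) = g ^ z := by
  rw [zmodPowHom, MonoidHom.coe_mk, OneHom.coe_mk, toAdd_ofAdd, ← zpow_natCast,
    ZMod.val_intCast, ← zpow_eq_zpow_emod' z hg]

theorem zmodPowHom_ofAdd_natCast (g : G) (hg : g ^ M = 1) (k : ℕ) :
    zmodPowHom g hg (ofAdd k) = g ^ k := by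
  simpa using zmodPowHom_ofAdd_intCast g hg k

theorem ofAdd_eq_ofAdd_natCast_pow {x : ZMod M} {d i : ℕ} (h : x.val = d * i) :
    ofAdd x = ofAdd (d : ZMod M) ^ i := by
  rw [← ofAdd_nsmul, nsmul_eq_mul, ← ZMod.natCast_zmod_val x, h, Nat.cast_mul, mul_comm]

end ZModPow

theorem ofAdd_one_pow {R : Type*} [AddMonoidWithOne R] (k : ℕ) :
    ofAdd (1 : R) ^ k = ofAdd (k : R) := by
  rw [← ofAdd_nsmul, nsmul_one]

theorem pow_mul_zpow_mul_inv_pow {G : Type*} [Group G] {a b : G} {v : ℤ}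
    (h : b * a * b⁻¹ = a ^ v) (k : ℕ) (z : ℤ) :
    b ^ k * a ^ z * (b ^ k)⁻¹ = a ^ (v ^ k * z) := by
  induction k with
  | zero => simp
  | succ k ih =>
    calc b ^ (k + 1) * a ^ z * (b ^ (k + 1))⁻¹
        = b * (b ^ k * a ^ z * (b ^ k)⁻¹) * b⁻¹ := by group
      _ = (b * a * b⁻¹) ^ (v ^ k * z) := by
          rw [ih, ← MulAut.conj_apply, map_zpow, MulAut.conj_apply]
      _ = a ^ (v ^ (k + 1) * z) := by rw [h, ← zpow_mul, pow_succ', mul_assoc]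

theorem Subgroup.map_center_mulEquiv {G H : Type*} [Group G] [Group H] (e : G ≃* H) :
    (center G).map e.toMonoidHom = center H := by
  ext y
  rw [mem_map_equiv, ← SetLike.mem_coe, ← SetLike.mem_coe, coe_center, coe_center,
    ← MulEquivClass.apply_mem_center_iff e, MulEquiv.apply_symm_apply]

namespace SemidirectProduct

variable {N H : Type*}

theorem commutatorElement_inl_inr [Group N] [Group H] {φ : H →* MulAut N} (x : N) (h : H) :
    ⁅(inl x : N ⋊[φ] H), (inr h : N ⋊[φ] H)⁆ = inl (x * (φ h x)⁻¹) := by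
  rw [commutatorElement_def, map_mul, ← map_inv (φ h) x, inl_aut, map_inv, map_inv]
  simp only [mul_assoc]

theorem mem_center_iff [CommGroup N] [CommGroup H] {φ : H →* MulAut N} {g : N ⋊[φ] H} :
    g ∈ center (N ⋊[φ] H) ↔ (∀ h, φ h g.left = g.left) ∧ φ g.right = 1 := by
  rw [Subgroup.mem_center_iff]
  constructor
  · intro hg
    refine ⟨fun h => ?_, MulEquiv.ext fun x => ?_⟩
    · simpa using congrArg left (hg (inr h))
    · simpa [mul_comm _ g.left] using (congrArg left (hg (inl x))).symm
  · rintro ⟨hl, hr⟩ k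
    ext <;> simp [hl, hr, mul_comm]

end SemidirectProduct

section CyclicAction

variable {N M : ℕ} [NeZero M] (u : ZMod N) (hu : u ^ M = 1)

def cyclicAction : Multiplicative (ZMod M) →* MulAut (Multiplicative (ZMod N)) :=
  (MulAutMultiplicative (ZMod N)).symm.toMonoidHom.comp <| AddAut.mulLeft.comp <|
    zmodPowHom (Units.ofPowEqOne u M hu (NeZero.ne M)) (Units.pow_ofPowEqOne hu _)

theorem cyclicAction_ofAdd_natCast_apply (k : ℕ) (x : Multiplicative (ZMod N)) :
    cyclicAction u hu (ofAdd k) x = ofAdd (u ^ k * x.toAdd) := by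
  rw [cyclicAction, MonoidHom.comp_apply, MonoidHom.comp_apply, zmodPowHom_ofAdd_natCast]
  change ofAdd (((Units.ofPowEqOne u M hu _ ^ k : (ZMod N)ˣ) : ZMod N) * x.toAdd) = _
  simp

theorem cyclicAction_ofAdd_natCast_eq_one_iff (k : ℕ) :
    cyclicAction u hu (ofAdd k) = 1 ↔ u ^ k = 1 := by
  refine ⟨fun h => ?_, fun h => MulEquiv.ext fun x => ?_⟩
  · simpa [cyclicAction_ofAdd_natCast_apply] using
      congrArg toAdd (DFunLike.congr_fun h (ofAdd 1))
  · simp [cyclicAction_ofAdd_natCast_apply, h]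

theorem mem_center_cyclicAction_iff
    {g : Multiplicative (ZMod N) ⋊[cyclicAction u hu] Multiplicative (ZMod M)} :
    g ∈ center _ ↔ u * g.left.toAdd = g.left.toAdd ∧ u ^ g.right.toAdd.val = 1 := by
  rw [SemidirectProduct.mem_center_iff, ← cyclicAction_ofAdd_natCast_eq_one_iff u hu,
    ZMod.natCast_zmod_val, ofAdd_toAdd]
  refine and_congr_left' ⟨fun h => ?_, fun h k => ?_⟩
  · have h1 := congrArg toAdd (h (ofAdd (1 : ℕ)))
    rwa [cyclicAction_ofAdd_natCast_apply, pow_one, toAdd_ofAdd] at h1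
  · rw [← ofAdd_toAdd k, ← ZMod.natCast_zmod_val k.toAdd, cyclicAction_ofAdd_natCast_apply]
    induction k.toAdd.val with
    | zero => simp
    | succ j ih => rw [pow_succ, mul_assoc, h, ih]

end CyclicAction

namespace Int

theorem pow_modEq_one_sub_pow_succ (p : ℕ) {s : ℕ} (hs : 2 ≤ s) {x : ℤ}
    (hx : x ≡ 1 - p ^ s [ZMOD p ^ (s + 1)]) : x ^ p ≡ 1 - p ^ (s + 1) [ZMOD p ^ (s + 2)] := by
  obtain ⟨s, rfl⟩ := Nat.exists_eq_add_of_le' hs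
  obtain ⟨t, ht⟩ := Int.modEq_iff_dvd.1 hx
  have hx' : x = 1 + (p : ℤ) ^ (s + 2) * (-1 - p * t) := by linear_combination -ht
  obtain ⟨e, he⟩ := sq_dvd_add_pow_sub_sub ((p : ℤ) ^ (s + 2) * (-1 - p * t)) 1 p
  rw [one_pow, one_pow, one_mul] at he
  rw [Int.modEq_iff_dvd, hx']
  exact ⟨t - (p : ℤ) ^ s * (-1 - p * t) ^ 2 * e, by linear_combination -he⟩

theorem one_sub_pow_pow_pow_modEq (p : ℕ) {r : ℕ} (hr : 2 ≤ r) (k : ℕ) :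
    (1 - (p : ℤ) ^ r) ^ p ^ k ≡ 1 - p ^ (r + k) [ZMOD p ^ (r + k + 1)] := by
  induction k with
  | zero => simp [Int.ModEq.refl]
  | succ k ih =>
    rw [pow_succ p k, pow_mul]
    exact pow_modEq_one_sub_pow_succ p (hr.trans (r.le_add_right k)) ih

end Int

namespace ZMod

variable {p n r : ℕ}

theorem orderOf_one_sub_prime_pow [hp : Fact p.Prime] (hr : 2 ≤ r) (hrn : r < n) :
    orderOf (1 - (p : ZMod (p ^ n)) ^ r) = p ^ (n - r) := by
  obtain ⟨k, rfl⟩ : ∃ k, n = r + k + 1 := ⟨n - r - 1, by omega⟩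
  have hk : (1 - (p : ZMod (p ^ (r + k + 1))) ^ r) ^ p ^ k = 1 - p ^ (r + k) := by
    have := (intCast_eq_intCast_iff _ _ _).2 (Int.one_sub_pow_pow_pow_modEq p hr k)
    push_cast at this
    exact this
  have hk1 : (1 - (p : ZMod (p ^ (r + k + 1))) ^ r) ^ p ^ (k + 1) = 1 := by
    have := (intCast_eq_intCast_iff _ _ (p ^ (r + k + 1))).2
      ((Int.one_sub_pow_pow_pow_modEq p hr (k + 1)).of_mul_right p)
    push_cast [← add_assoc] at this
    rwa [← Nat.cast_pow p (r + k + 1), natCast_self, sub_zero] at this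
  rw [show r + k + 1 - r = k + 1 by omega]
  refine orderOf_eq_prime_pow ?_ hk1
  rw [hk, sub_eq_self, ← Nat.cast_pow, natCast_eq_zero_iff,
    Nat.pow_dvd_pow_iff_le_right hp.out.one_lt]
  omega

theorem one_sub_prime_pow_pow_eq_one_iff [Fact p.Prime] (hr : 2 ≤ r) (hrn : r < n) (k : ℕ) :
    (1 - (p : ZMod (p ^ n)) ^ r) ^ k = 1 ↔ p ^ (n - r) ∣ k := by
  rw [← orderOf_dvd_iff_pow_eq_one, orderOf_one_sub_prime_pow hr hrn]

theorem one_sub_pow_mul_eq_self_iff [NeZero p] (hrn : r ≤ n) (x : ZMod (p ^ n)) :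
    (1 - (p : ZMod (p ^ n)) ^ r) * x = x ↔ p ^ (n - r) ∣ x.val := by
  have hx : ((p ^ r * x.val : ℕ) : ZMod (p ^ n)) = p ^ r * x := by
    push_cast [natCast_val, cast_id]
    rfl
  rw [sub_mul, one_mul, sub_eq_self, ← hx, natCast_eq_zero_iff]
  generalize x.val = v
  rw [← pow_mul_pow_sub p hrn]
  exact Nat.mul_dvd_mul_iff_left (pow_pos (Nat.pos_of_neZero p) r)

end ZMod

section Model

variable {p n m r : ℕ} [Fact p.Prime]

theorem ZMod.one_sub_prime_pow_pow_prime_pow_eq_one (hr : 2 ≤ r) (hrn : r < n)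
    (hm : n - r ≤ m) : (1 - (p : ZMod (p ^ n)) ^ r) ^ p ^ m = 1 :=
  (ZMod.one_sub_prime_pow_pow_eq_one_iff hr hrn _).2 (pow_dvd_pow p hm)

variable (p n m r) in
abbrev GSplitModel (hr : 2 ≤ r) (hrn : r < n) (hm : n - r ≤ m) : Type :=
  Multiplicative (ZMod (p ^ n))
    ⋊[cyclicAction _ (ZMod.one_sub_prime_pow_pow_prime_pow_eq_one hr hrn hm)]
    Multiplicative (ZMod (p ^ m))

theorem center_gSplitModel (hr : 2 ≤ r) (hrn : r < n) (hm : n - r ≤ m) :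
    center (GSplitModel p n m r hr hrn hm) =
      closure {inl (ofAdd ((p ^ (n - r) : ℕ) : ZMod (p ^ n))),
        inr (ofAdd ((p ^ (n - r) : ℕ) : ZMod (p ^ m)))} := by
  apply le_antisymm
  · intro g hg
    rw [mem_center_cyclicAction_iff, ZMod.one_sub_pow_mul_eq_self_iff hrn.le,
      ZMod.one_sub_prime_pow_pow_eq_one_iff hr hrn] at hg
    obtain ⟨⟨i, hi⟩, ⟨j, hj⟩⟩ := hg
    rw [← inl_left_mul_inr_right g, ← ofAdd_toAdd g.left, ← ofAdd_toAdd g.right,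
      ofAdd_eq_ofAdd_natCast_pow hi, ofAdd_eq_ofAdd_natCast_pow hj, map_pow, map_pow]
    exact mul_mem (pow_mem (subset_closure (by simp)) i) (pow_mem (subset_closure (by simp)) j)
  · rw [closure_le]
    rintro _ (rfl | rfl) <;>
      rw [SetLike.mem_coe, mem_center_cyclicAction_iff, ZMod.one_sub_pow_mul_eq_self_iff hrn.le,
        ZMod.one_sub_prime_pow_pow_eq_one_iff hr hrn]
    · simp only [left_inl, right_inl, toAdd_ofAdd, toAdd_one, ZMod.val_natCast, ZMod.val_zero]
      exact ⟨(Nat.dvd_mod_iff (pow_dvd_pow p (n.sub_le r))).2 dvd_rfl, dvd_zero _⟩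
    · simp only [left_inr, right_inr, toAdd_ofAdd, toAdd_one, ZMod.val_natCast, ZMod.val_zero]
      exact ⟨dvd_zero _, (Nat.dvd_mod_iff (pow_dvd_pow p hm)).2 dvd_rfl⟩

end Model

namespace GSplit

variable {p n m r : ℕ}

abbrev a : GSplit p n m r := PresentedGroup.of 0

abbrev b : GSplit p n m r := PresentedGroup.of 1

theorem a_pow_eq_one : (a : GSplit p n m r) ^ p ^ n = 1 :=
  PresentedGroup.one_of_mem (by simp [splitRels])

theorem b_pow_eq_one : (b : GSplit p n m r) ^ p ^ m = 1 :=
  PresentedGroup.one_of_mem (by simp [splitRels])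

theorem b_mul_a_mul_b_inv : b * a * b⁻¹ = (a : GSplit p n m r) ^ (1 - p ^ r : ℤ) := by
  have h := PresentedGroup.mk_eq_mk_of_mul_inv_mem (rels := splitRels p n m r)
    (x := ⁅FreeGroup.of (0 : Fin 2), FreeGroup.of 1⁆) (y := FreeGroup.of 0 ^ p ^ r)
    (Or.inr (Or.inr rfl))
  rw [map_commutatorElement, map_pow] at h
  change ⁅(a : GSplit p n m r), b⁆ = a ^ p ^ r at h
  rw [sub_eq_neg_add, zpow_add_one, zpow_neg, ← Nat.cast_pow, zpow_natCast, ← h,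
    commutatorElement_def]
  group

section Model

variable (p) [Fact p.Prime] (hr : 2 ≤ r) (hrn : r < n) (hm : n - r ≤ m)

theorem lift_eq_one_of_mem_splitRels :
    ∀ w ∈ splitRels p n m r, FreeGroup.lift
      (![inl (ofAdd 1), inr (ofAdd 1)] : Fin 2 → GSplitModel p n m r hr hrn hm) w = 1 := by
  rintro w (rfl | rfl | rfl)
  · rw [map_pow, FreeGroup.lift_apply_of, Matrix.cons_val_zero, ← map_pow, ofAdd_one_pow,
      ZMod.natCast_self, ofAdd_zero, map_one]
  · rw [map_pow, FreeGroup.lift_apply_of, Matrix.cons_val_one, Matrix.cons_val_fin_one,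
      ← map_pow, ofAdd_one_pow, ZMod.natCast_self, ofAdd_zero, map_one]
  · rw [map_mul, map_inv, map_pow, map_commutatorElement, FreeGroup.lift_apply_of,
      FreeGroup.lift_apply_of, Matrix.cons_val_zero, Matrix.cons_val_one,
      Matrix.cons_val_fin_one, commutatorElement_inl_inr, mul_inv_eq_one, ← map_pow]
    congr 1
    rw [← Nat.cast_one (R := ZMod (p ^ m)), cyclicAction_ofAdd_natCast_apply, ofAdd_one_pow]
    apply toAdd.injective
    simp

def toModel : GSplit p n m r →* GSplitModel p n m r hr hrn hm :=
  PresentedGroup.toGroup (lift_eq_one_of_mem_splitRels p hr hrn hm)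

theorem toModel_a : toModel p hr hrn hm a = inl (ofAdd 1) := PresentedGroup.toGroup.of _

theorem toModel_b : toModel p hr hrn hm b = inr (ofAdd 1) := PresentedGroup.toGroup.of _

def ofModel : GSplitModel p n m r hr hrn hm →* GSplit p n m r :=
  SemidirectProduct.lift (zmodPowHom a a_pow_eq_one) (zmodPowHom b b_pow_eq_one) fun g => by
    refine MonoidHom.ext fun x => ?_
    obtain ⟨k, rfl⟩ : ∃ k : ℕ, ofAdd (k : ZMod (p ^ m)) = g := ⟨g.toAdd.val, by simp⟩
    obtain ⟨z, rfl⟩ : ∃ z : ℤ, ofAdd (z : ZMod (p ^ n)) = x := ⟨x.toAdd.cast, by simp⟩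
    have hcast : (1 - (p : ZMod (p ^ n)) ^ r) ^ k * (z : ZMod (p ^ n)) =
        (((1 - (p : ℤ) ^ r) ^ k * z : ℤ) : ZMod (p ^ n)) := by push_cast; rfl
    simp only [MonoidHom.comp_apply, MulEquiv.coe_toMonoidHom, MulAut.conj_apply,
      cyclicAction_ofAdd_natCast_apply, toAdd_ofAdd, hcast, zmodPowHom_ofAdd_intCast,
      zmodPowHom_ofAdd_natCast]
    rw [pow_mul_zpow_mul_inv_pow b_mul_a_mul_b_inv]

theorem ofModel_comp_toModel : (ofModel p hr hrn hm).comp (toModel p hr hrn hm) = .id _ :=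
  PresentedGroup.ext fun i => by
    fin_cases i
    · simpa [toModel_a, ofModel] using zmodPowHom_ofAdd_natCast a a_pow_eq_one 1
    · simpa [toModel_b, ofModel] using zmodPowHom_ofAdd_natCast b b_pow_eq_one 1

theorem toModel_comp_ofModel : (toModel p hr hrn hm).comp (ofModel p hr hrn hm) = .id _ := by
  refine SemidirectProduct.hom_ext (MonoidHom.ext fun x => ?_) (MonoidHom.ext fun y => ?_)
  · obtain ⟨k, rfl⟩ : ∃ k : ℕ, ofAdd (k : ZMod (p ^ n)) = x := ⟨x.toAdd.val, by simp⟩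
    simp only [MonoidHom.comp_apply, ofModel, lift_inl, zmodPowHom_ofAdd_natCast]
    rw [map_pow, toModel_a, ← map_pow, ofAdd_one_pow, MonoidHom.id_apply]
  · obtain ⟨k, rfl⟩ : ∃ k : ℕ, ofAdd (k : ZMod (p ^ m)) = y := ⟨y.toAdd.val, by simp⟩
    simp only [MonoidHom.comp_apply, ofModel, lift_inr, zmodPowHom_ofAdd_natCast]
    rw [map_pow, toModel_b, ← map_pow, ofAdd_one_pow, MonoidHom.id_apply]

def equivModel : GSplit p n m r ≃* GSplitModel p n m r hr hrn hm :=
  (toModel p hr hrn hm).toMulEquiv (ofModel p hr hrn hm) (ofModel_comp_toModel p hr hrn hm)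
    (toModel_comp_ofModel p hr hrn hm)

theorem equivModel_a_pow (k : ℕ) :
    equivModel p hr hrn hm (a ^ k) = inl (ofAdd (k : ZMod (p ^ n))) := by
  rw [equivModel, MonoidHom.toMulEquiv_apply, map_pow, toModel_a, ← map_pow, ofAdd_one_pow]

theorem equivModel_b_pow (k : ℕ) :
    equivModel p hr hrn hm (b ^ k) = inr (ofAdd (k : ZMod (p ^ m))) := by
  rw [equivModel, MonoidHom.toMulEquiv_apply, map_pow, toModel_b, ← map_pow, ofAdd_one_pow]

end Model

end GSplit

/-- In `G = G(n,m,r)` with generators `a`, `b`, the center equals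
`⟨a^(p^(n-r)), b^(p^(n-r))⟩`. -/
theorem center_gSplit (p n m r : ℕ) (hp : p.Prime)
    (hr : 2 ≤ r) (hrn : r + 1 ≤ n) (hm : n - r ≤ m) :
    Subgroup.center (GSplit p n m r) =
      Subgroup.closure
        {(PresentedGroup.of 0 : GSplit p n m r) ^ p ^ (n - r),
          (PresentedGroup.of 1 : GSplit p n m r) ^ p ^ (n - r)} := by
  have : Fact p.Prime := ⟨hp⟩
  let e := GSplit.equivModel p hr hrn hm
  apply map_injective (f := e.toMonoidHom) e.injective
  rw [map_center_mulEquiv, MonoidHom.map_closure, Set.image_pair, MulEquiv.coe_toMonoidHom,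
    GSplit.equivModel_a_pow, GSplit.equivModel_b_pow, center_gSplitModel]
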